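/- arXiv:2108.07694 — 3 statements merged into one kernel-verified Lean document; each statement's English description precedes it below -/
import Mathlib

section
/- Parametrization independence of the integral element: let 𝓛 : Mat_{N×(n+1)}(ℝ) → ℝ be a differentiable density of degree 1, let A ∈ Mat_{N×(n+1)}(ℝ), let U be a real (n+1)×n matrix, and let M be an invertible real (n+1)×(n+1) matrix with det M > 0. Then v_l(A·M, M⁻¹·U) = v_l(A, U) for every l = 1,…,N. -/
/-!
Write `v_l(A, U) = D_l(A) ⬝ᵥ w(U)`, where `D_l(A)` is the `l`-th row of `∂𝓛/∂A`.
Differentiating `𝓛 (X * M) = det M * 𝓛 X` gives `M *ᵥ D_l(A * M) = det M • D_l(A)`, and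
expanding `det (M * [x | V]) = det M * det [x | V]` along the first column gives
`Mᵀ *ᵥ w(M * V) = det M • w(V)`. Taking `V = M⁻¹ * U`, the two factors `det M` cancel in
`det M * v_l(A * M, M⁻¹ * U)`.
-/

attribute [local instance] Matrix.normedAddCommGroup Matrix.normedSpace

noncomputable def signedMinor {n : ℕ} (U : Matrix (Fin (n + 1)) (Fin n) ℝ)
    (j : Fin (n + 1)) : ℝ :=
  (-1 : ℝ) ^ (j : ℕ) * (U.submatrix j.succAbove id).det

noncomputable def integralElement {n N : ℕ}
    (𝓛 : Matrix (Fin N) (Fin (n + 1)) ℝ → ℝ)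
    (A : Matrix (Fin N) (Fin (n + 1)) ℝ)
    (U : Matrix (Fin (n + 1)) (Fin n) ℝ) (l : Fin N) : ℝ :=
  ∑ j : Fin (n + 1), fderiv ℝ 𝓛 A (Matrix.single l j 1) * signedMinor U j

open Matrix

theorem single_one_mul_eq_sum {ι κ R : Type*} [Fintype κ] [DecidableEq ι] [DecidableEq κ]
    [Semiring R] (l : ι) (j : κ) (M : Matrix κ κ R) :
    single l j (1 : R) * M = ∑ k, M j k • single l k 1 := by
  ext a b
  by_cases h : a = l <;> simp [h, Ne.symm, single_apply, Matrix.sum_apply]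

section Derivatives

variable {ι κ : Type*} [Fintype ι] [Fintype κ] [DecidableEq κ]

noncomputable def mulRightContinuousLinearEquiv (M : Matrix κ κ ℝ) (hM : IsUnit M.det) :
    Matrix ι κ ℝ ≃L[ℝ] Matrix ι κ ℝ :=
  LinearEquiv.toContinuousLinearEquiv
    { mulRightLinearMap ι ℝ M with
      invFun := (· * M⁻¹)
      left_inv := fun X => mul_nonsing_inv_cancel_right M X hM
      right_inv := fun X => nonsing_inv_mul_cancel_right M X hM }

/-- No differentiability is needed: `fderiv` commutes with precomposition by a linear
isomorphism and with scaling, also where it takes its junk value `0`. -/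
theorem fderiv_mul_right_of_homogeneous {f : Matrix ι κ ℝ → ℝ} {M : Matrix κ κ ℝ}
    (hM : IsUnit M.det) {c : ℝ} (hf : ∀ X, f (X * M) = c * f X) (A H : Matrix ι κ ℝ) :
    fderiv ℝ f (A * M) (H * M) = c * fderiv ℝ f A H := by
  set e := mulRightContinuousLinearEquiv (ι := ι) M hM
  have hcomp : f ∘ e = c • f := funext hf
  have hchain : fderiv ℝ (c • f) A = (fderiv ℝ f (A * M)).comp (e : _ →L[ℝ] _) := by
    rw [← hcomp]; exact e.comp_right_fderiv
  calc fderiv ℝ f (A * M) (H * M) = fderiv ℝ (c • f) A H := (DFunLike.congr_fun hchain H).symm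
    _ = c * fderiv ℝ f A H := DFunLike.congr_fun (congrFun (fderiv_const_smul_field c) A) H

variable [DecidableEq ι]

noncomputable def fderivRow (f : Matrix ι κ ℝ → ℝ) (A : Matrix ι κ ℝ) (l : ι) : κ → ℝ :=
  fun j => fderiv ℝ f A (single l j 1)

theorem mulVec_fderivRow_mul {f : Matrix ι κ ℝ → ℝ} {M : Matrix κ κ ℝ}
    (hM : IsUnit M.det) {c : ℝ} (hf : ∀ X, f (X * M) = c * f X) (A : Matrix ι κ ℝ) (l : ι) :
    M *ᵥ fderivRow f (A * M) l = c • fderivRow f A l := by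
  ext j
  rw [Pi.smul_apply, smul_eq_mul, fderivRow, ← fderiv_mul_right_of_homogeneous hM hf,
    single_one_mul_eq_sum, map_sum]
  simp only [map_smul, smul_eq_mul, mulVec, dotProduct, fderivRow]

end Derivatives

section SignedMinors

def colCons {m R : Type*} {n : ℕ} (x : m → R) (V : Matrix m (Fin n) R) :
    Matrix m (Fin (n + 1)) R :=
  of fun i => Fin.cons (x i) (V i)

theorem mul_colCons {m R : Type*} [Fintype m] [CommSemiring R] {n : ℕ} (M : Matrix m m R)
    (x : m → R) (V : Matrix m (Fin n) R) :
    M * colCons x V = colCons (M *ᵥ x) (M * V) := by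
  ext i k
  cases k using Fin.cases <;> rfl

variable {n : ℕ}

theorem det_colCons (x : Fin (n + 1) → ℝ) (V : Matrix (Fin (n + 1)) (Fin n) ℝ) :
    (colCons x V).det = x ⬝ᵥ signedMinor V := by
  have hsub (i : Fin (n + 1)) :
      (colCons x V).submatrix i.succAbove Fin.succ = V.submatrix i.succAbove id := rfl
  rw [det_succ_column_zero, dotProduct]
  refine Finset.sum_congr rfl fun i _ => ?_
  rw [hsub, signedMinor, show colCons x V i 0 = x i from rfl]
  ring

theorem transpose_mulVec_signedMinor_mul (M : Matrix (Fin (n + 1)) (Fin (n + 1)) ℝ)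
    (V : Matrix (Fin (n + 1)) (Fin n) ℝ) :
    Mᵀ *ᵥ signedMinor (M * V) = M.det • signedMinor V := by
  have hdot (x : Fin (n + 1) → ℝ) :
      x ⬝ᵥ (Mᵀ *ᵥ signedMinor (M * V)) = x ⬝ᵥ (M.det • signedMinor V) := by
    rw [dotProduct_smul, ← det_colCons, smul_eq_mul, ← det_mul, mul_colCons, det_colCons,
      mulVec_transpose, dotProduct_comm, ← dotProduct_mulVec, dotProduct_comm]
  ext j
  simpa using hdot (Pi.single j 1)

end SignedMinors

theorem integralElement_eq_fderivRow_dotProduct {n N : ℕ}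
    (𝓛 : Matrix (Fin N) (Fin (n + 1)) ℝ → ℝ) (A : Matrix (Fin N) (Fin (n + 1)) ℝ)
    (U : Matrix (Fin (n + 1)) (Fin n) ℝ) (l : Fin N) :
    integralElement 𝓛 A U l = fderivRow 𝓛 A l ⬝ᵥ signedMinor U :=
  rfl

theorem integralElement_parametrization_independent_general
    (n N : ℕ)
    (𝓛 : Matrix (Fin N) (Fin (n + 1)) ℝ → ℝ)
    (hdens : ∀ (A : Matrix (Fin N) (Fin (n + 1)) ℝ)
      (M : Matrix (Fin (n + 1)) (Fin (n + 1)) ℝ),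
      0 < M.det → 𝓛 (A * M) = M.det * 𝓛 A)
    (A : Matrix (Fin N) (Fin (n + 1)) ℝ)
    (U : Matrix (Fin (n + 1)) (Fin n) ℝ)
    (M : Matrix (Fin (n + 1)) (Fin (n + 1)) ℝ)
    (hMdet : 0 < M.det) (l : Fin N) :
    integralElement 𝓛 (A * M) (M⁻¹ * U) l = integralElement 𝓛 A U l := by
  have hM : IsUnit M.det := hMdet.ne'.isUnit
  have hrow := mulVec_fderivRow_mul hM (hdens · M hMdet) A l
  have hminor := transpose_mulVec_signedMinor_mul M (M⁻¹ * U)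
  rw [mul_nonsing_inv_cancel_left M U hM] at hminor
  apply mul_left_cancel₀ hMdet.ne'
  simp only [integralElement_eq_fderivRow_dotProduct]
  calc M.det * (fderivRow 𝓛 (A * M) l ⬝ᵥ signedMinor (M⁻¹ * U))
      = fderivRow 𝓛 (A * M) l ⬝ᵥ (Mᵀ *ᵥ signedMinor U) := by
        rw [hminor, dotProduct_smul, smul_eq_mul]
    _ = (M *ᵥ fderivRow 𝓛 (A * M) l) ⬝ᵥ signedMinor U := by
        rw [dotProduct_mulVec, vecMul_transpose]
    _ = M.det * (fderivRow 𝓛 A l ⬝ᵥ signedMinor U) := by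
        rw [hrow, smul_dotProduct, smul_eq_mul]

/-- Parametrization independence of the integral element: if `𝓛` is a
differentiable density of degree 1, `A ∈ Mat_{N×(n+1)}(ℝ)`, `U` a real `(n+1)×n`
matrix, and `M` an invertible `(n+1)×(n+1)` matrix with `det M > 0`, then
`v_l(A·M, M⁻¹·U) = v_l(A, U)` for every `l`. -/
theorem integralElement_parametrization_independent
    (n N : ℕ)
    (𝓛 : Matrix (Fin N) (Fin (n + 1)) ℝ → ℝ)
    (hdiff : Differentiable ℝ 𝓛)
    (hdens : ∀ (A : Matrix (Fin N) (Fin (n + 1)) ℝ)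
      (M : Matrix (Fin (n + 1)) (Fin (n + 1)) ℝ),
      0 < M.det → 𝓛 (A * M) = M.det * 𝓛 A)
    (A : Matrix (Fin N) (Fin (n + 1)) ℝ)
    (U : Matrix (Fin (n + 1)) (Fin n) ℝ)
    (M : Matrix (Fin (n + 1)) (Fin (n + 1)) ℝ)
    (hMunit : IsUnit M.det) (hMdet : 0 < M.det) (l : Fin N) :
    integralElement 𝓛 (A * M) (M⁻¹ * U) l = integralElement 𝓛 A U l :=
  integralElement_parametrization_independent_general n N 𝓛 hdens A U M hMdet l
end

section
/- The generalized Hamilton–Jacobi constraints ℋ^k vanish identically on integral elements: let 𝓛 : Mat_{N×(n+1)}(ℝ) → ℝ be a differentiable density of degree 1, let A ∈ Mat_{N×(n+1)}(ℝ), and let U be a real (n+1)×n matrix. Then for every k ∈ {1,…,n}, Σ_{l=1}^N v_l(A,U) · (A·U)_{lk} = 0. -/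
/-!
Differentiating the density law `𝓛 (A * (1 + t • X)) = det (1 + t • X) * 𝓛 A` at `t = 0` gives
the Euler identity `d𝓛_A (A * X) = tr X * 𝓛 A`. Take `X = u_k wᵀ`, with `u_k` the `k`-th column of
`U` and `w = (w_j(U))_j`: then `A * X = (A * U)_k wᵀ`, so the left side is `Σ_l v_l (A * U)_{lk}`,
while `tr X = u_k ⬝ w` is the Laplace expansion of the determinant of `U` with `u_k` prepended as a
column, which vanishes because that column is repeated.
-/

attribute [local instance] Matrix.normedAddCommGroup Matrix.normedSpace

open Matrix Polynomial Topology

theorem hasDerivAt_det_one_add_smul {𝕜 m : Type*} [NontriviallyNormedField 𝕜] [Fintype m]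
    [DecidableEq m] (X : Matrix m m 𝕜) :
    HasDerivAt (fun t : 𝕜 => (1 + t • X).det) X.trace 0 := by
  have h := (det (1 + (Polynomial.X : 𝕜[X]) • X.map C)).hasDerivAt 0
  rw [derivative_det_one_add_X_smul] at h
  convert h using 1
  funext t
  rw [eval_det]
  congr 1
  ext i j
  by_cases hij : i = j <;> simp [hij, one_apply, mul_comm]

theorem LinearMap.apply_eq_sum_single {R M m n : Type*} [CommSemiring R] [AddCommMonoid M]
    [Module R M] [Fintype m] [Fintype n] [DecidableEq m] [DecidableEq n]
    (f : Matrix m n R →ₗ[R] M) (B : Matrix m n R) :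
    f B = ∑ i, ∑ j, B i j • f (Matrix.single i j 1) := by
  conv_lhs => rw [matrix_eq_sum_single B]
  simp only [map_sum, ← map_smul, smul_single, smul_eq_mul, mul_one]

theorem sum_mul_signedMinor_eq_det {n : ℕ} (U : Matrix (Fin (n + 1)) (Fin n) ℝ)
    (v : Fin (n + 1) → ℝ) :
    ∑ s, v s * signedMinor U s = (of fun i => Fin.cons (v i) (U i)).det := by
  rw [det_succ_column_zero]
  refine Finset.sum_congr rfl fun s _ => ?_
  have : (of fun i => (Fin.cons (v i) (U i) : Fin (n + 1) → ℝ)).submatrix s.succAbove Fin.succ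
      = U.submatrix s.succAbove id := by
    ext; simp
  simp only [signedMinor, of_apply, Fin.cons_zero, this]
  ring

theorem transpose_dotProduct_signedMinor {n : ℕ} (U : Matrix (Fin (n + 1)) (Fin n) ℝ)
    (k : Fin n) : Uᵀ k ⬝ᵥ signedMinor U = 0 := by
  rw [dotProduct, sum_mul_signedMinor_eq_det]
  exact det_zero_of_column_eq (Fin.succ_ne_zero k).symm fun _ => rfl

theorem fderiv_apply_mul_eq_trace_mul {m ι : Type*} [Fintype m] [Fintype ι] [DecidableEq ι]
    {𝓛 : Matrix m ι ℝ → ℝ} {A : Matrix m ι ℝ} (hA : DifferentiableAt ℝ 𝓛 A)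
    (hdens : ∀ M : Matrix ι ι ℝ, 0 < M.det → 𝓛 (A * M) = M.det * 𝓛 A) (X : Matrix ι ι ℝ) :
    fderiv ℝ 𝓛 A (A * X) = X.trace * 𝓛 A := by
  have hcurve : HasDerivAt (fun t : ℝ => A * (1 + t • X)) (A * X) 0 := by
    have h := ((hasDerivAt_id (0 : ℝ)).smul_const (A * X)).const_add A
    rw [one_smul] at h
    simp only [Matrix.mul_add, Matrix.mul_one, Matrix.mul_smul]
    exact h
  have hlhs : HasDerivAt (fun t : ℝ => 𝓛 (A * (1 + t • X))) (fderiv ℝ 𝓛 A (A * X)) 0 :=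
    hA.hasFDerivAt.comp_hasDerivAt_of_eq 0 hcurve (by simp)
  -- For small `t` the matrix `1 + t • X` has positive determinant, so the density law applies.
  have hpos : ∀ᶠ t in 𝓝 (0 : ℝ), 0 < (1 + t • X).det :=
    (hasDerivAt_det_one_add_smul X).continuousAt.eventually (lt_mem_nhds (a := (0 : ℝ)) (by simp))
  have hrhs : HasDerivAt (fun t : ℝ => 𝓛 (A * (1 + t • X))) (X.trace * 𝓛 A) 0 :=
    ((hasDerivAt_det_one_add_smul X).mul_const (𝓛 A)).congr_of_eventuallyEq
      (hpos.mono fun t ht => hdens _ ht)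
  exact hlhs.unique hrhs

/-- The generalized Hamilton–Jacobi constraints `ℋ^k` vanish
identically on integral elements: if `𝓛` is a differentiable density of degree 1,
then for every `A`, every `(n+1)×n` matrix `U`, and every `k`,
`Σ_l v_l(A,U) · (A·U)_{lk} = 0`. -/
theorem HJ_constraints_vanish_on_integral_elements
    (n N : ℕ)
    (𝓛 : Matrix (Fin N) (Fin (n + 1)) ℝ → ℝ)
    (hdiff : Differentiable ℝ 𝓛)
    (hdens : ∀ (A : Matrix (Fin N) (Fin (n + 1)) ℝ)
      (M : Matrix (Fin (n + 1)) (Fin (n + 1)) ℝ),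
      0 < M.det → 𝓛 (A * M) = M.det * 𝓛 A)
    (A : Matrix (Fin N) (Fin (n + 1)) ℝ)
    (U : Matrix (Fin (n + 1)) (Fin n) ℝ) (k : Fin n) :
    ∑ l : Fin N, integralElement 𝓛 A U l * (A * U) l k = 0 := by
  have heuler := fderiv_apply_mul_eq_trace_mul (hdiff A) (hdens A)
    (vecMulVec (Uᵀ k) (signedMinor U))
  rw [trace_vecMulVec, transpose_dotProduct_signedMinor, zero_mul, mul_vecMulVec] at heuler
  rw [← heuler, ← ContinuousLinearMap.coe_coe, LinearMap.apply_eq_sum_single]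
  refine Finset.sum_congr rfl fun l _ => ?_
  simp only [integralElement, Finset.sum_mul, vecMulVec_apply, smul_eq_mul,
    ContinuousLinearMap.coe_coe]
  refine Finset.sum_congr rfl fun j _ => ?_
  rw [show (A *ᵥ Uᵀ k) l = (A * U) l k from rfl]
  ring
end

section
/- Conformal invariance of the Dirichlet energy: let U ⊆ ℂ be open, let f : U → ℂ be holomorphic and injective on U, and let φ : ℂ → ℝ be continuously differentiable on f(U). Then ∫_U ‖∇(φ∘f)(z)‖² dz = ∫_{f(U)} ‖∇φ(w)‖² dw, where ∇ denotes the total (Fréchet) derivative with respect to the two real coordinates, ‖·‖ is the Euclidean norm of the gradient, the integrals are Lebesgue (lower) integrals with respect to planar Lebesgue measure, and the identity holds in [0,∞]. -/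
/-!
At each point a holomorphic `f` acts real-linearly as multiplication by `f' z`, a rotation scaled by
`‖f' z‖`, whose Jacobian determinant is `‖f' z‖ ^ 2`. Hence
`‖∇(φ ∘ f)‖² = ‖f'‖² ‖∇φ ∘ f‖² = |det Df| ‖∇φ ∘ f‖²`, and the change of variables formula for the
injective map `f` turns the left integral into the right one. The open mapping theorem makes
`f '' U` open, so that `φ` is differentiable at every point of it.
-/
open MeasureTheory Filter Topology

section

variable {𝕜 E F : Type*} [NontriviallyNormedField 𝕜] [NormedAlgebra ℝ 𝕜]
  [NormedAddCommGroup E] [NormedSpace 𝕜 E] [NormedSpace ℝ E] [IsScalarTower ℝ 𝕜 E] [Nontrivial E]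
  [NormedAddCommGroup F] [NormedSpace ℝ F]

theorem ContinuousLinearMap.norm_comp_smul_one (L : E →L[ℝ] F) (c : 𝕜) :
    ‖L.comp (c • (1 : E →L[ℝ] E))‖ = ‖c‖ * ‖L‖ := by
  have hnorm (a : 𝕜) : ‖a • (1 : E →L[ℝ] E)‖ = ‖a‖ := by
    rw [norm_smul, norm_one, mul_one]
  rcases eq_or_ne c 0 with rfl | hc
  · simp
  refine le_antisymm ?_ ?_
  · calc ‖L.comp (c • (1 : E →L[ℝ] E))‖ ≤ ‖L‖ * ‖c • (1 : E →L[ℝ] E)‖ := L.opNorm_comp_le _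
      _ = ‖c‖ * ‖L‖ := by rw [hnorm, mul_comm]
  · have hL : L = (L.comp (c • (1 : E →L[ℝ] E))).comp (c⁻¹ • (1 : E →L[ℝ] E)) := by
      ext x; simp [smul_smul, hc]
    calc ‖c‖ * ‖L‖ ≤ ‖c‖ * (‖L.comp (c • (1 : E →L[ℝ] E))‖ * ‖c⁻¹ • (1 : E →L[ℝ] E)‖) := by
          gcongr; nth_rw 1 [hL]; exact ContinuousLinearMap.opNorm_comp_le _ _
      _ = ‖L.comp (c • (1 : E →L[ℝ] E))‖ := by
          rw [hnorm, norm_inv]; field_simp [norm_ne_zero_iff.mpr hc]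

end

theorem ContinuousLinearMap.det_complex_smul_one (c : ℂ) :
    (c • (1 : ℂ →L[ℝ] ℂ)).det = Complex.normSq c := by
  rw [← Algebra.norm_complex_apply, Algebra.norm_apply]
  congr 1

theorem DifferentiableOn.isOpen_image_of_injOn {U : Set ℂ} {f : ℂ → ℂ}
    (hf : DifferentiableOn ℂ f U) (hU : IsOpen U) (hinj : Set.InjOn f U) : IsOpen (f '' U) := by
  refine isOpen_iff_mem_nhds.mpr ?_
  rintro _ ⟨z, hz, rfl⟩
  rcases (hf.analyticAt (hU.mem_nhds hz)).eventually_constant_or_nhds_le_map_nhds with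
    hconst | hopen
  · exfalso
    have hz_isolated : ∀ᶠ w in 𝓝[≠] z, w = z := nhdsWithin_le_nhds <|
      (hconst.and (hU.mem_nhds hz)).mono fun w ⟨hfw, hw⟩ => hinj hw hz hfw
    obtain ⟨w, hwz, hw⟩ := (hz_isolated.and self_mem_nhdsWithin).exists
    exact hw hwz
  · exact hopen (image_mem_map (hU.mem_nhds hz))

theorem norm_fderiv_comp_sq_eq_abs_det_mul {F : Type*} [NormedAddCommGroup F] [NormedSpace ℝ F]
    {φ : ℂ → F} {f : ℂ → ℂ} {z : ℂ}
    (hφ : DifferentiableAt ℝ φ (f z)) (hf : DifferentiableAt ℂ f z) :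
    ‖fderiv ℝ (φ ∘ f) z‖ ^ 2 = |(fderiv ℝ f z).det| * ‖fderiv ℝ φ (f z)‖ ^ 2 := by
  have hf' : fderiv ℝ f z = deriv f z • (1 : ℂ →L[ℝ] ℂ) :=
    hf.hasDerivAt.complexToReal_fderiv.fderiv
  rw [fderiv_comp z hφ (hf.restrictScalars ℝ), hf', ContinuousLinearMap.norm_comp_smul_one,
    ContinuousLinearMap.det_complex_smul_one, abs_of_nonneg (Complex.normSq_nonneg _),
    Complex.normSq_eq_norm_sq, mul_pow]

/-- Conformal invariance of the Dirichlet energy: for `U ⊆ ℂ` open,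
`f` holomorphic and injective on `U`, and `φ : ℂ → ℝ` continuously differentiable
on `f(U)`, one has `∫_U ‖∇(φ∘f)‖² = ∫_{f(U)} ‖∇φ‖²` (Lebesgue lower integrals,
identity in `[0,∞]`). -/
theorem dirichlet_energy_conformal_invariance
    (U : Set ℂ) (hU : IsOpen U)
    (f : ℂ → ℂ) (hf : ∀ z ∈ U, DifferentiableAt ℂ f z)
    (hinj : Set.InjOn f U)
    (φ : ℂ → ℝ) (hφ : ContDiffOn ℝ 1 φ (f '' U)) :
    ∫⁻ z in U, ENNReal.ofReal (‖fderiv ℝ (φ ∘ f) z‖ ^ 2)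
      = ∫⁻ w in f '' U, ENNReal.ofReal (‖fderiv ℝ φ w‖ ^ 2) := by
  have hfU : IsOpen (f '' U) :=
    DifferentiableOn.isOpen_image_of_injOn (fun z hz => (hf z hz).differentiableWithinAt) hU hinj
  have hφ' (z : ℂ) (hz : z ∈ U) : DifferentiableAt ℝ φ (f z) :=
    (hφ.differentiableOn one_ne_zero).differentiableAt (hfU.mem_nhds (Set.mem_image_of_mem f hz))
  rw [lintegral_image_eq_lintegral_abs_det_fderiv_mul volume hU.measurableSet
    (fun z hz => ((hf z hz).restrictScalars ℝ).hasFDerivAt.hasFDerivWithinAt) hinj]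
  refine setLIntegral_congr_fun hU.measurableSet fun z hz => ?_
  rw [norm_fderiv_comp_sq_eq_abs_det_mul (hφ' z hz) (hf z hz), ENNReal.ofReal_mul (abs_nonneg _)]
end
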